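/- Let f: R^n -> R be twice differentiable and suppose (∂f/∂y_i)(x)(∂f/∂y_j)(y)(∂^2 f/∂y_j∂y_i)(z) <= 0 for all x, y, z in R^n and all i, j. Let Y', Y'' be independent n-dimensional standard Gaussian vectors and define T(y) = \int_0^1 (1/(2 sqrt t)) E[ sum_i (∂f/∂y_i)(y)(∂f/∂y_i)(sqrt t y + sqrt(1-t) Y') ] dt. Then for every y in R^n, Tbar(y) = \int_0^1 (1/(2 sqrt s)) E[ sum_j (∂f/∂y_j)(y)(∂T/∂y_j)(sqrt s y + sqrt(1-s) Y'') ] ds <= 0. -/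

import Mathlib

open MeasureTheory ProbabilityTheory Real

/-- The standard Gaussian measure on `ℝⁿ`. -/
noncomputable def stdGaussian (n : ℕ) : Measure (Fin n → ℝ) :=
  Measure.pi fun _ => gaussianReal 0 1

/-- Subexponential growth at infinity: `|h(x)| ≤ C e^{c‖x‖}`. -/
def SubexpGrowth {n : ℕ} (h : (Fin n → ℝ) → ℝ) : Prop :=
  ∃ C c : ℝ, 0 < C ∧ 0 < c ∧ ∀ x : Fin n → ℝ, |h x| ≤ C * Real.exp (c * ‖x‖)

instance (n : ℕ) : IsProbabilityMeasure (stdGaussian n) := by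
  unfold _root_.stdGaussian; infer_instance

-- 1d exponential moment
lemma int1d {c : ℝ} (hc : 0 ≤ c) :
    Integrable (fun x : ℝ => Real.exp (c * |x|)) (gaussianReal 0 1) := by
  rw [gaussianReal_of_var_ne_zero 0 one_ne_zero]
  rw [integrable_withDensity_iff (measurable_gaussianPDF 0 1)
    (Filter.Eventually.of_forall fun x => ENNReal.ofReal_lt_top)]
  have hpdf : ∀ x : ℝ, (gaussianPDF 0 1 x).toReal = gaussianPDFReal 0 1 x := fun x =>
    ENNReal.toReal_ofReal (gaussianPDFReal_nonneg 0 1 x)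
  have key : ∀ x : ℝ, ‖Real.exp (c * |x|) * (gaussianPDF 0 1 x).toReal‖ ≤
      ((Real.sqrt (2 * π))⁻¹ * Real.exp (c ^ 2)) * Real.exp (-(1/4) * x ^ 2) := by
    intro x
    rw [hpdf, gaussianPDFReal]; simp only [NNReal.coe_one]
    have h1 : (0:ℝ) ≤ Real.exp (c * |x|) * ((Real.sqrt (2 * π * 1))⁻¹ *
        Real.exp (-(x - 0) ^ 2 / (2 * 1))) := by positivity
    rw [Real.norm_of_nonneg h1]
    have h2 : Real.exp (c * |x|) * Real.exp (-(x - 0) ^ 2 / (2 * 1)) ≤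
        Real.exp (c ^ 2) * Real.exp (-(1/4) * x ^ 2) := by
      rw [← Real.exp_add, ← Real.exp_add]
      apply Real.exp_le_exp.2
      nlinarith [sq_nonneg (|x| / 2 - c), sq_abs x]
    calc Real.exp (c * |x|) * ((Real.sqrt (2 * π * 1))⁻¹ * Real.exp (-(x - 0) ^ 2 / (2 * 1)))
        = (Real.sqrt (2 * π * 1))⁻¹ * (Real.exp (c * |x|) * Real.exp (-(x - 0) ^ 2 / (2 * 1))) := by ring
      _ ≤ (Real.sqrt (2 * π))⁻¹ * (Real.exp (c ^ 2) * Real.exp (-(1/4) * x ^ 2)) := by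
          rw [mul_one]
          exact mul_le_mul_of_nonneg_left h2 (by positivity)
      _ = ((Real.sqrt (2 * π))⁻¹ * Real.exp (c ^ 2)) * Real.exp (-(1/4) * x ^ 2) := by ring
  refine Integrable.mono' (((integrable_exp_neg_mul_sq (by norm_num : (0:ℝ) < 1/4)).const_mul
    ((Real.sqrt (2 * π))⁻¹ * Real.exp (c ^ 2)))) ?_ (Filter.Eventually.of_forall key)
  · exact ((Real.continuous_exp.comp (continuous_const.mul continuous_abs)).aestronglyMeasurable).mul
      ((measurable_gaussianPDF 0 1).ennreal_toReal.aestronglyMeasurable)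

lemma intExp {n : ℕ} {c : ℝ} (hc : 0 ≤ c) :
    Integrable (fun y : Fin n → ℝ => Real.exp (c * ‖y‖)) (stdGaussian n) := by
  have hprod : Integrable (fun y : Fin n → ℝ => ∏ i, Real.exp (c * |y i|)) (stdGaussian n) := by
    letI : MeasureSpace ℝ := ⟨gaussianReal 0 1⟩
    haveI : SigmaFinite (volume : Measure ℝ) :=
      (inferInstance : SigmaFinite (gaussianReal 0 1))
    have : stdGaussian n = (volume : Measure (Fin n → ℝ)) := rfl
    rw [this]
    exact Integrable.fintype_prod (f := fun _ x => Real.exp (c * |x|)) (fun i => int1d hc)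
  refine hprod.mono' ?_ (Filter.Eventually.of_forall fun y => ?_)
  · exact (Real.continuous_exp.comp (continuous_const.mul continuous_norm)).aestronglyMeasurable
  · rw [Real.norm_of_nonneg (Real.exp_nonneg _), ← Real.exp_sum]
    apply Real.exp_le_exp.2
    rw [← Finset.mul_sum]
    apply mul_le_mul_of_nonneg_left ?_ hc
    refine (pi_norm_le_iff_of_nonneg (Finset.sum_nonneg fun i _ => abs_nonneg (y i))).2
      fun i => ?_
    exact Finset.single_le_sum (fun j _ => abs_nonneg (y j)) (Finset.mem_univ i)

lemma intSqrt : IntegrableOn (fun t : ℝ => 1 / (2 * Real.sqrt t)) (Set.Ioo (0:ℝ) 1) := by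
  have h : IntegrableOn (fun t : ℝ => t ^ (-(1:ℝ)/2)) (Set.Ioo (0:ℝ) 1) :=
    (intervalIntegral.integrableOn_Ioo_rpow_iff one_pos).2 (by norm_num)
  refine IntegrableOn.congr_fun (h.const_mul (1/2)) (fun t ht => ?_) measurableSet_Ioo
  have ht0 : (0:ℝ) < t := ht.1
  have hs : Real.sqrt t ≠ 0 := by positivity
  rw [show (-(1:ℝ)/2) = -(1/2) by norm_num, Real.rpow_neg ht0.le, ← Real.sqrt_eq_rpow]
  field_simp

/-- partial derivative -/
noncomputable def pd {n : ℕ} (f : (Fin n → ℝ) → ℝ) (i : Fin n) : (Fin n → ℝ) → ℝ :=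
  fun x => fderiv ℝ f x (Pi.single i 1)

lemma constants {n : ℕ} (F : Fin n → (Fin n → ℝ) → ℝ) (G : Fin n → Fin n → (Fin n → ℝ) → ℝ)
    (h1 : ∀ i, SubexpGrowth (F i)) (h2 : ∀ i j, SubexpGrowth (G i j)) :
    ∃ C c : ℝ, 0 < C ∧ 0 < c ∧ (∀ i x, |F i x| ≤ C * Real.exp (c * ‖x‖)) ∧
      (∀ i j x, |G i j x| ≤ C * Real.exp (c * ‖x‖)) := by
  choose C1 c1 hC1 hc1 hF using h1
  choose C2 c2 hC2 hc2 hG using h2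
  refine ⟨1 + (∑ i, C1 i) + ∑ i, ∑ j, C2 i j, 1 + (∑ i, c1 i) + ∑ i, ∑ j, c2 i j,
    ?_, ?_, fun i x => ?_, fun i j x => ?_⟩
  · have : (0:ℝ) ≤ ∑ i, C1 i := Finset.sum_nonneg fun i _ => (hC1 i).le
    have : (0:ℝ) ≤ ∑ i, ∑ j, C2 i j :=
      Finset.sum_nonneg fun i _ => Finset.sum_nonneg fun j _ => (hC2 i j).le
    linarith
  · have : (0:ℝ) ≤ ∑ i, c1 i := Finset.sum_nonneg fun i _ => (hc1 i).le
    have : (0:ℝ) ≤ ∑ i, ∑ j, c2 i j :=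
      Finset.sum_nonneg fun i _ => Finset.sum_nonneg fun j _ => (hc2 i j).le
    linarith
  · calc |F i x| ≤ C1 i * Real.exp (c1 i * ‖x‖) := hF i x
      _ ≤ (1 + (∑ i, C1 i) + ∑ i, ∑ j, C2 i j) * Real.exp ((1 + (∑ i, c1 i) + ∑ i, ∑ j, c2 i j) * ‖x‖) := by
        refine mul_le_mul ?_ ?_ (Real.exp_nonneg _) ?_
        · have h1 : C1 i ≤ ∑ k, C1 k :=
            Finset.single_le_sum (fun k _ => (hC1 k).le) (Finset.mem_univ i)
          have h2 : (0:ℝ) ≤ ∑ i, ∑ j, C2 i j :=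
            Finset.sum_nonneg fun i _ => Finset.sum_nonneg fun j _ => (hC2 i j).le
          linarith
        · apply Real.exp_le_exp.2
          refine mul_le_mul_of_nonneg_right ?_ (norm_nonneg x)
          have h1 : c1 i ≤ ∑ k, c1 k :=
            Finset.single_le_sum (fun k _ => (hc1 k).le) (Finset.mem_univ i)
          have h2 : (0:ℝ) ≤ ∑ i, ∑ j, c2 i j :=
            Finset.sum_nonneg fun i _ => Finset.sum_nonneg fun j _ => (hc2 i j).le
          linarith
        · have h1 : (0:ℝ) ≤ ∑ k, C1 k := Finset.sum_nonneg fun k _ => (hC1 k).le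
          have h2 : (0:ℝ) ≤ ∑ i, ∑ j, C2 i j :=
            Finset.sum_nonneg fun i _ => Finset.sum_nonneg fun j _ => (hC2 i j).le
          linarith
  · calc |G i j x| ≤ C2 i j * Real.exp (c2 i j * ‖x‖) := hG i j x
      _ ≤ (1 + (∑ i, C1 i) + ∑ i, ∑ j, C2 i j) * Real.exp ((1 + (∑ i, c1 i) + ∑ i, ∑ j, c2 i j) * ‖x‖) := by
        refine mul_le_mul ?_ ?_ (Real.exp_nonneg _) ?_
        · have h1 : C2 i j ≤ ∑ l, C2 i l :=
            Finset.single_le_sum (fun l _ => (hC2 i l).le) (Finset.mem_univ j)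
          have h1' : (∑ l, C2 i l) ≤ ∑ k, ∑ l, C2 k l :=
            Finset.single_le_sum (f := fun k => ∑ l, C2 k l)
              (fun k _ => Finset.sum_nonneg fun l _ => (hC2 k l).le) (Finset.mem_univ i)
          have h2 : (0:ℝ) ≤ ∑ k, C1 k := Finset.sum_nonneg fun k _ => (hC1 k).le
          linarith
        · apply Real.exp_le_exp.2
          refine mul_le_mul_of_nonneg_right ?_ (norm_nonneg x)
          have h1 : c2 i j ≤ ∑ l, c2 i l :=
            Finset.single_le_sum (fun l _ => (hc2 i l).le) (Finset.mem_univ j)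
          have h1' : (∑ l, c2 i l) ≤ ∑ k, ∑ l, c2 k l :=
            Finset.single_le_sum (f := fun k => ∑ l, c2 k l)
              (fun k _ => Finset.sum_nonneg fun l _ => (hc2 k l).le) (Finset.mem_univ i)
          have h2 : (0:ℝ) ≤ ∑ k, c1 k := Finset.sum_nonneg fun k _ => (hc1 k).le
          linarith
        · have h1 : (0:ℝ) ≤ ∑ k, C1 k := Finset.sum_nonneg fun k _ => (hC1 k).le
          have h2 : (0:ℝ) ≤ ∑ i, ∑ j, C2 i j :=
            Finset.sum_nonneg fun i _ => Finset.sum_nonneg fun j _ => (hC2 i j).le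
          linarith

lemma opnorm_le {n : ℕ} (φ : (Fin n → ℝ) →L[ℝ] ℝ) {M : ℝ} (hM : 0 ≤ M)
    (h : ∀ j, |φ (Pi.single j 1)| ≤ M) : ‖φ‖ ≤ n * M := by
  refine ContinuousLinearMap.opNorm_le_bound φ (by positivity) fun v => ?_
  have hv : v = ∑ j, v j • (Pi.single j 1 : Fin n → ℝ) := by
    ext k
    simp [Pi.single_apply]
  calc ‖φ v‖ = |∑ j, v j * φ ((Pi.single j 1 : Fin n → ℝ))| := by
        conv_lhs => rw [hv]
        rw [map_sum]
        simp [Real.norm_eq_abs]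
    _ ≤ ∑ j, |v j * φ ((Pi.single j 1 : Fin n → ℝ))| := Finset.abs_sum_le_sum_abs _ _
    _ ≤ ∑ j : Fin n, M * ‖v‖ := by
        refine Finset.sum_le_sum fun j _ => ?_
        rw [abs_mul]
        calc |v j| * |φ ((Pi.single j 1 : Fin n → ℝ))| ≤ ‖v‖ * M :=
              mul_le_mul (norm_le_pi_norm v j) (h j) (abs_nonneg _) (norm_nonneg v)
          _ = M * ‖v‖ := mul_comm _ _
    _ = n * M * ‖v‖ := by simp [Finset.sum_const, mul_assoc]

set_option maxHeartbeats 2000000 in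
lemma key_nonpos {n : ℕ} (f : (Fin n → ℝ) → ℝ) {C c : ℝ} (hC : 0 < C) (hc : 0 < c)
    (hf : ContDiff ℝ 2 f)
    (hgB : ∀ i x, |pd f i x| ≤ C * Real.exp (c * ‖x‖))
    (hDB : ∀ i j x, |fderiv ℝ (pd f i) x (Pi.single j 1)| ≤ C * Real.exp (c * ‖x‖))
    (hsign : ∀ (x y z : Fin n → ℝ) (i j : Fin n),
      pd f i x * pd f j y * fderiv ℝ (pd f i) z (Pi.single j 1) ≤ 0)
    (T : (Fin n → ℝ) → ℝ)
    (hT : ∀ y, T y = ∫ t in Set.Ioo (0 : ℝ) 1, (1 / (2 * Real.sqrt t)) *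
      ∫ y', ∑ i, pd f i y * pd f i (Real.sqrt t • y + Real.sqrt (1 - t) • y')
        ∂(stdGaussian n)) :
    ∀ y w : Fin n → ℝ, ∑ j, pd f j y * fderiv ℝ T w (Pi.single j 1) ≤ 0 := by
  intro y w0
  -- basic differentiability facts
  have hgc : ∀ i, ContDiff ℝ 1 (pd f i) := fun i =>
    (hf.fderiv_right (by norm_num)).clm_apply contDiff_const
  have hgcont : ∀ i, Continuous (pd f i) := fun i => (hgc i).continuous
  have hDgcont : ∀ i, Continuous (fderiv ℝ (pd f i)) := fun i =>
    (hgc i).continuous_fderiv one_ne_zero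
  have hgderiv : ∀ i x, HasFDerivAt (pd f i) (fderiv ℝ (pd f i) x) x := fun i x =>
    ((hgc i).differentiable one_ne_zero x).hasFDerivAt
  have hDnorm : ∀ i x, ‖fderiv ℝ (pd f i) x‖ ≤ n * (C * Real.exp (c * ‖x‖)) := fun i x =>
    opnorm_le _ (by positivity) (fun j => hDB i j x)
  -- the measure and integrand
  set ν := stdGaussian n with hν
  set μ := (volume.restrict (Set.Ioo (0:ℝ) 1)).prod ν with hμ
  set u : (ℝ × (Fin n → ℝ)) → (Fin n → ℝ) → (Fin n → ℝ) :=
    fun p w => Real.sqrt p.1 • w + Real.sqrt (1 - p.1) • p.2 with hu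
  set H : (Fin n → ℝ) → (ℝ × (Fin n → ℝ)) → ℝ :=
    fun w p => (1 / (2 * Real.sqrt p.1)) * ∑ i, pd f i w * pd f i (u p w) with hH
  set H' : (Fin n → ℝ) → (ℝ × (Fin n → ℝ)) → ((Fin n → ℝ) →L[ℝ] ℝ) :=
    fun w p => (1 / (2 * Real.sqrt p.1)) • ∑ i,
      (pd f i (u p w) • fderiv ℝ (pd f i) w
        + (Real.sqrt p.1 * pd f i w) • fderiv ℝ (pd f i) (u p w)) with hH'
  -- pointwise differentiability in w
  have claimA : ∀ (p : ℝ × (Fin n → ℝ)) (w : Fin n → ℝ),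
      HasFDerivAt (fun w' => H w' p) (H' w p) w := by
    intro p w
    have hterm : ∀ i : Fin n, HasFDerivAt (fun w' => pd f i w' * pd f i (u p w'))
        (pd f i w • (Real.sqrt p.1 • fderiv ℝ (pd f i) (u p w))
          + pd f i (u p w) • fderiv ℝ (pd f i) w) w := by
      intro i
      have h2 : HasFDerivAt (fun w' => u p w')
          (Real.sqrt p.1 • ContinuousLinearMap.id ℝ (Fin n → ℝ)) w := by
        have := (((hasFDerivAt_id (𝕜 := ℝ) (E := Fin n → ℝ) w).const_smul (Real.sqrt p.1))).add_const
          (Real.sqrt (1 - p.1) • p.2)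
        simpa [hu] using this
      have h3 := (hgderiv i (u p w)).comp w h2
      have hcomp : (fderiv ℝ (pd f i) (u p w)).comp
          (Real.sqrt p.1 • ContinuousLinearMap.id ℝ (Fin n → ℝ))
          = Real.sqrt p.1 • fderiv ℝ (pd f i) (u p w) := by
        ext v; simp
      rw [hcomp] at h3
      exact (hgderiv i w).mul h3
    have hsum := HasFDerivAt.fun_sum (fun i (_ : i ∈ Finset.univ) => hterm i)
    have hmul := hsum.const_mul (1 / (2 * Real.sqrt p.1))
    refine hmul.congr_fderiv ?_
    ext v
    simp only [hH', ContinuousLinearMap.smul_apply, ContinuousLinearMap.sum_apply,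
      ContinuousLinearMap.add_apply, smul_eq_mul]
    congr 1
    refine Finset.sum_congr rfl fun i _ => by ring
  have unorm : ∀ p : ℝ × (Fin n → ℝ), p.1 ∈ Set.Ioo (0:ℝ) 1 → ∀ w : Fin n → ℝ,
      ‖u p w‖ ≤ ‖w‖ + ‖p.2‖ := by
    rintro p ⟨hp0, hp1⟩ w
    have h1 : Real.sqrt p.1 ≤ 1 := Real.sqrt_le_one.mpr hp1.le
    have h2 : Real.sqrt (1 - p.1) ≤ 1 := Real.sqrt_le_one.mpr (by linarith)
    calc ‖u p w‖ ≤ ‖Real.sqrt p.1 • w‖ + ‖Real.sqrt (1 - p.1) • p.2‖ := norm_add_le _ _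
      _ = Real.sqrt p.1 * ‖w‖ + Real.sqrt (1 - p.1) * ‖p.2‖ := by
          rw [norm_smul, norm_smul, Real.norm_eq_abs, Real.norm_eq_abs,
            abs_of_nonneg (Real.sqrt_nonneg _), abs_of_nonneg (Real.sqrt_nonneg _)]
      _ ≤ 1 * ‖w‖ + 1 * ‖p.2‖ := by
          gcongr
      _ = ‖w‖ + ‖p.2‖ := by ring
  -- norm bound
  set K : ℝ := 2 * n * n * C^2 * Real.exp (c * (‖w0‖ + 1)) * Real.exp (c * (‖w0‖ + 1)) with hK
  set bound : (ℝ × (Fin n → ℝ)) → ℝ :=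
    fun p => (K * (1 / (2 * Real.sqrt p.1))) * Real.exp (c * ‖p.2‖) with hbound
  have claimB : ∀ p : ℝ × (Fin n → ℝ), p.1 ∈ Set.Ioo (0:ℝ) 1 →
      ∀ w ∈ Metric.ball w0 1, ‖H' w p‖ ≤ bound p := by
    intro p hp w hw
    have hw1 : ‖w‖ ≤ ‖w0‖ + 1 := by
      have h1 : ‖w - w0‖ < 1 := mem_ball_iff_norm.mp hw
      have h2 : ‖w‖ - ‖w0‖ ≤ ‖w - w0‖ := norm_sub_norm_le w w0
      linarith
    have hun : ‖u p w‖ ≤ ‖w0‖ + 1 + ‖p.2‖ := by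
      have := unorm p hp w
      linarith
    have hEw : Real.exp (c * ‖w‖) ≤ Real.exp (c * (‖w0‖ + 1)) :=
      Real.exp_le_exp.2 (mul_le_mul_of_nonneg_left hw1 hc.le)
    have hEu : Real.exp (c * ‖u p w‖)
        ≤ Real.exp (c * (‖w0‖ + 1)) * Real.exp (c * ‖p.2‖) := by
      rw [← Real.exp_add]
      refine Real.exp_le_exp.2 ?_
      have := mul_le_mul_of_nonneg_left hun hc.le
      linarith [this]
    have hst : Real.sqrt p.1 ≤ 1 := Real.sqrt_le_one.mpr hp.2.le
    have hterm : ∀ i : Fin n,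
        ‖pd f i (u p w) • fderiv ℝ (pd f i) w
          + (Real.sqrt p.1 * pd f i w) • fderiv ℝ (pd f i) (u p w)‖
        ≤ 2 * n * C^2 * Real.exp (c * (‖w0‖ + 1))
            * (Real.exp (c * (‖w0‖ + 1)) * Real.exp (c * ‖p.2‖)) := by
      intro i
      have hB1 : ‖pd f i (u p w) • fderiv ℝ (pd f i) w‖
          ≤ (C * Real.exp (c * ‖u p w‖)) * (n * (C * Real.exp (c * ‖w‖))) := by
        rw [norm_smul, Real.norm_eq_abs]
        exact mul_le_mul (hgB i _) (hDnorm i w) (norm_nonneg _) (by positivity)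
      have hB2 : ‖(Real.sqrt p.1 * pd f i w) • fderiv ℝ (pd f i) (u p w)‖
          ≤ (C * Real.exp (c * ‖w‖)) * (n * (C * Real.exp (c * ‖u p w‖))) := by
        rw [norm_smul, Real.norm_eq_abs, abs_mul,
          abs_of_nonneg (Real.sqrt_nonneg _)]
        refine mul_le_mul ?_ (hDnorm i _) (norm_nonneg _) (by positivity)
        calc Real.sqrt p.1 * |pd f i w| ≤ 1 * |pd f i w| :=
              mul_le_mul_of_nonneg_right hst (abs_nonneg _)
          _ = |pd f i w| := one_mul _
          _ ≤ C * Real.exp (c * ‖w‖) := hgB i w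
      calc ‖pd f i (u p w) • fderiv ℝ (pd f i) w
            + (Real.sqrt p.1 * pd f i w) • fderiv ℝ (pd f i) (u p w)‖
          ≤ ‖pd f i (u p w) • fderiv ℝ (pd f i) w‖
            + ‖(Real.sqrt p.1 * pd f i w) • fderiv ℝ (pd f i) (u p w)‖ := norm_add_le _ _
        _ ≤ (C * Real.exp (c * ‖u p w‖)) * (n * (C * Real.exp (c * ‖w‖)))
            + (C * Real.exp (c * ‖w‖)) * (n * (C * Real.exp (c * ‖u p w‖))) :=
            add_le_add hB1 hB2
        _ = 2 * n * C^2 * Real.exp (c * ‖w‖) * Real.exp (c * ‖u p w‖) := by ring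
        _ ≤ 2 * n * C^2 * Real.exp (c * (‖w0‖ + 1))
              * (Real.exp (c * (‖w0‖ + 1)) * Real.exp (c * ‖p.2‖)) := by
            have h2n : (0:ℝ) ≤ 2 * n * C^2 := by positivity
            calc 2 * n * C^2 * Real.exp (c * ‖w‖) * Real.exp (c * ‖u p w‖)
                ≤ 2 * n * C^2 * Real.exp (c * (‖w0‖ + 1)) * Real.exp (c * ‖u p w‖) := by
                  gcongr
              _ ≤ 2 * n * C^2 * Real.exp (c * (‖w0‖ + 1))
                  * (Real.exp (c * (‖w0‖ + 1)) * Real.exp (c * ‖p.2‖)) := by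
                  gcongr
    calc ‖H' w p‖ ≤ |1 / (2 * Real.sqrt p.1)|
          * ‖∑ i, (pd f i (u p w) • fderiv ℝ (pd f i) w
              + (Real.sqrt p.1 * pd f i w) • fderiv ℝ (pd f i) (u p w))‖ := by
          simp only [hH']
          have h := norm_smul_le (1 / (2 * Real.sqrt p.1))
            (∑ i, (pd f i (u p w) • fderiv ℝ (pd f i) w
              + (Real.sqrt p.1 * pd f i w) • fderiv ℝ (pd f i) (u p w)))
          rwa [Real.norm_eq_abs] at h
      _ ≤ (1 / (2 * Real.sqrt p.1)) * (n * (2 * n * C^2 * Real.exp (c * (‖w0‖ + 1))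
            * (Real.exp (c * (‖w0‖ + 1)) * Real.exp (c * ‖p.2‖)))) := by
          rw [abs_of_nonneg (div_nonneg zero_le_one (by positivity))]
          refine mul_le_mul_of_nonneg_left ?_ (div_nonneg zero_le_one (by positivity))
          calc ‖∑ i, (pd f i (u p w) • fderiv ℝ (pd f i) w
                + (Real.sqrt p.1 * pd f i w) • fderiv ℝ (pd f i) (u p w))‖
              ≤ ∑ i : Fin n, (2 * n * C^2 * Real.exp (c * (‖w0‖ + 1))
                  * (Real.exp (c * (‖w0‖ + 1)) * Real.exp (c * ‖p.2‖))) :=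
                norm_sum_le_of_le _ fun i _ => hterm i
            _ = n * (2 * n * C^2 * Real.exp (c * (‖w0‖ + 1))
                  * (Real.exp (c * (‖w0‖ + 1)) * Real.exp (c * ‖p.2‖))) := by
                simp [Finset.sum_const]
      _ = bound p := by
          rw [hbound, hK]
          ring
  have bound_int : Integrable bound μ := by
    have h1 : Integrable (fun t : ℝ => K * (1 / (2 * Real.sqrt t)))
        (volume.restrict (Set.Ioo (0:ℝ) 1)) := intSqrt.const_mul K
    exact h1.mul_prod (intExp hc.le)
  -- a.e. membership
  have aemem : ∀ᵐ p ∂μ, p.1 ∈ Set.Ioo (0:ℝ) 1 := by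
    rw [ae_iff]
    have hset : {p : ℝ × (Fin n → ℝ) | ¬ p.1 ∈ Set.Ioo (0:ℝ) 1}
        = (Set.Ioo (0:ℝ) 1)ᶜ ×ˢ Set.univ := by
      ext p; simp
    rw [hset, hμ, Measure.prod_prod, Measure.restrict_apply measurableSet_Ioo.compl]
    simp
  -- measurability
  have hucont : ∀ w : Fin n → ℝ, Continuous (fun p : ℝ × (Fin n → ℝ) => u p w) := by
    intro w
    exact ((Real.continuous_sqrt.comp continuous_fst).smul continuous_const).add
      ((Real.continuous_sqrt.comp (continuous_const.sub continuous_fst)).smul continuous_snd)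
  have m1 : Measurable fun p : ℝ × (Fin n → ℝ) => 1 / (2 * Real.sqrt p.1) := by
    simp only [one_div]
    exact ((Real.continuous_sqrt.measurable.comp measurable_fst).const_mul 2).inv
  have measH : ∀ w, AEStronglyMeasurable (H w) μ := by
    intro w
    have m2 : Continuous fun p : ℝ × (Fin n → ℝ) => ∑ i, pd f i w * pd f i (u p w) := by
      refine continuous_finset_sum _ fun i _ => ?_
      exact continuous_const.mul ((hgcont i).comp (hucont w))
    exact (m1.aestronglyMeasurable.mul m2.measurable.aestronglyMeasurable)
  have measH' : AEStronglyMeasurable (H' w0) μ := by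
    have m2 : Continuous fun p : ℝ × (Fin n → ℝ) => ∑ i,
        (pd f i (u p w0) • fderiv ℝ (pd f i) w0
          + (Real.sqrt p.1 * pd f i w0) • fderiv ℝ (pd f i) (u p w0)) := by
      refine continuous_finset_sum _ fun i _ => ?_
      exact (((hgcont i).comp (hucont w0)).smul continuous_const).add
        (((Real.continuous_sqrt.comp continuous_fst).mul continuous_const).smul
          ((hDgcont i).comp (hucont w0)))
    exact ((m1.stronglyMeasurable.smul m2.stronglyMeasurable).aestronglyMeasurable)
  -- integrability of H w for each w
  have intH : ∀ w, Integrable (H w) μ := by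
    intro w
    set M : ℝ := n * C^2 * Real.exp (c * ‖w‖) * Real.exp (c * ‖w‖) with hM
    have hbint : Integrable (fun p : ℝ × (Fin n → ℝ) =>
        (M * (1 / (2 * Real.sqrt p.1))) * Real.exp (c * ‖p.2‖)) μ :=
      (intSqrt.const_mul M).mul_prod (intExp hc.le)
    refine Integrable.mono' hbint (measH w) ?_
    filter_upwards [aemem] with p hp
    have hun : ‖u p w‖ ≤ ‖w‖ + ‖p.2‖ := unorm p hp w
    have hEu : Real.exp (c * ‖u p w‖) ≤ Real.exp (c * ‖w‖) * Real.exp (c * ‖p.2‖) := by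
      rw [← Real.exp_add]
      refine Real.exp_le_exp.2 ?_
      have := mul_le_mul_of_nonneg_left hun hc.le
      linarith [this]
    have hterm : ∀ i : Fin n, |pd f i w * pd f i (u p w)|
        ≤ C^2 * Real.exp (c * ‖w‖) * (Real.exp (c * ‖w‖) * Real.exp (c * ‖p.2‖)) := by
      intro i
      rw [abs_mul]
      calc |pd f i w| * |pd f i (u p w)|
          ≤ (C * Real.exp (c * ‖w‖)) * (C * Real.exp (c * ‖u p w‖)) :=
            mul_le_mul (hgB i w) (hgB i _) (abs_nonneg _) (by positivity)
        _ ≤ (C * Real.exp (c * ‖w‖)) * (C * (Real.exp (c * ‖w‖) * Real.exp (c * ‖p.2‖))) := by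
            gcongr
        _ = C^2 * Real.exp (c * ‖w‖) * (Real.exp (c * ‖w‖) * Real.exp (c * ‖p.2‖)) := by ring
    calc ‖H w p‖ = |1 / (2 * Real.sqrt p.1)| * |∑ i, pd f i w * pd f i (u p w)| := by
          simp only [hH]
          rw [Real.norm_eq_abs, abs_mul]
      _ ≤ (1 / (2 * Real.sqrt p.1))
            * (n * (C^2 * Real.exp (c * ‖w‖) * (Real.exp (c * ‖w‖) * Real.exp (c * ‖p.2‖)))) := by
          rw [abs_of_nonneg (div_nonneg zero_le_one (by positivity))]
          refine mul_le_mul_of_nonneg_left ?_ (div_nonneg zero_le_one (by positivity))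
          calc |∑ i, pd f i w * pd f i (u p w)|
              ≤ ∑ i, |pd f i w * pd f i (u p w)| := Finset.abs_sum_le_sum_abs _ _
            _ ≤ ∑ _i : Fin n, (C^2 * Real.exp (c * ‖w‖)
                  * (Real.exp (c * ‖w‖) * Real.exp (c * ‖p.2‖))) :=
                Finset.sum_le_sum fun i _ => hterm i
            _ = n * (C^2 * Real.exp (c * ‖w‖)
                  * (Real.exp (c * ‖w‖) * Real.exp (c * ‖p.2‖))) := by
                simp [Finset.sum_const]
      _ = (M * (1 / (2 * Real.sqrt p.1))) * Real.exp (c * ‖p.2‖) := by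
          rw [hM]; ring
  have intH' : Integrable (H' w0) μ := by
    refine Integrable.mono' bound_int measH' ?_
    filter_upwards [aemem] with p hp
    exact claimB p hp w0 (Metric.mem_ball_self one_pos)
  -- Fubini representation of T
  have hTrep : T = fun w => ∫ p, H w p ∂μ := by
    funext w
    rw [hT w]
    have hstep : ∀ t ∈ Set.Ioo (0:ℝ) 1, (1 / (2 * Real.sqrt t)) *
        ∫ y', ∑ i, pd f i w * pd f i (Real.sqrt t • w + Real.sqrt (1 - t) • y') ∂ν
        = ∫ y', H w (t, y') ∂ν := by
      intro t _
      rw [← integral_const_mul]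
    rw [setIntegral_congr_fun measurableSet_Ioo hstep]
    exact integral_integral (f := fun t y' => H w (t, y')) (intH w)
  -- differentiation under the integral sign
  have hTderiv : HasFDerivAt T (∫ p, H' w0 p ∂μ) w0 := by
    rw [hTrep]
    refine hasFDerivAt_integral_of_dominated_of_fderiv_le (Metric.ball_mem_nhds w0 one_pos)
      (Filter.Eventually.of_forall fun w => measH w) (intH w0) measH' ?_ bound_int
      (Filter.Eventually.of_forall fun p w _ => claimA p w)
    filter_upwards [aemem] with p hp
    exact fun w hw => claimB p hp w hw
  have hfd : fderiv ℝ T w0 = ∫ p, H' w0 p ∂μ := hTderiv.fderiv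
  -- final computation
  rw [hfd]
  have step1 : ∀ j : Fin n, (∫ p, H' w0 p ∂μ) (Pi.single j 1)
      = ∫ p, H' w0 p (Pi.single j 1) ∂μ := fun j => ContinuousLinearMap.integral_apply intH' _
  calc ∑ j, pd f j y * (∫ p, H' w0 p ∂μ) (Pi.single j 1)
      = ∑ j, ∫ p, pd f j y * H' w0 p (Pi.single j 1) ∂μ := by
        refine Finset.sum_congr rfl fun j _ => ?_
        rw [step1 j, integral_const_mul]
    _ = ∫ p, ∑ j, pd f j y * H' w0 p (Pi.single j 1) ∂μ := by
        rw [integral_finset_sum]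
        exact fun j _ => (intH'.apply_continuousLinearMap _).const_mul _
    _ ≤ 0 := by
        refine integral_nonpos fun p => ?_
        have happ : ∀ j : Fin n, H' w0 p (Pi.single j 1)
            = (1 / (2 * Real.sqrt p.1)) * ∑ i,
              (pd f i (u p w0) * fderiv ℝ (pd f i) w0 (Pi.single j 1)
                + (Real.sqrt p.1 * pd f i w0) * fderiv ℝ (pd f i) (u p w0) (Pi.single j 1)) := by
          intro j
          simp [hH', ContinuousLinearMap.sum_apply]
        calc ∑ j, pd f j y * H' w0 p (Pi.single j 1)
            = ∑ j, (1 / (2 * Real.sqrt p.1)) * ∑ i,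
              ((pd f i (u p w0) * pd f j y * fderiv ℝ (pd f i) w0 (Pi.single j 1))
                + Real.sqrt p.1 * (pd f i w0 * pd f j y
                    * fderiv ℝ (pd f i) (u p w0) (Pi.single j 1))) := by
              refine Finset.sum_congr rfl fun j _ => ?_
              rw [happ j, mul_left_comm]
              congr 1
              rw [Finset.mul_sum]
              refine Finset.sum_congr rfl fun i _ => by ring
          _ ≤ 0 := by
              refine Finset.sum_nonpos fun j _ => ?_
              refine mul_nonpos_of_nonneg_of_nonpos
                (div_nonneg zero_le_one (by positivity)) ?_
              refine Finset.sum_nonpos fun i _ => ?_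
              exact add_nonpos (hsign _ _ _ _ _)
                (mul_nonpos_of_nonneg_of_nonpos (Real.sqrt_nonneg _) (hsign _ _ _ _ _))


/-- Under the sign condition (ii), the second-order term `T̄` is nonpositive. -/
theorem Tbar_nonpos (n : ℕ) (f : (Fin n → ℝ) → ℝ)
    (hf : ContDiff ℝ 2 f)
    (hfgrowth' : ∀ i : Fin n, SubexpGrowth fun x => fderiv ℝ f x (Pi.single i 1))
    (hfgrowth'' : ∀ i j : Fin n, SubexpGrowth fun x =>
      fderiv ℝ (fun z => fderiv ℝ f z (Pi.single i 1)) x (Pi.single j 1))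
    (hsign : ∀ (x y z : Fin n → ℝ) (i j : Fin n),
      fderiv ℝ f x (Pi.single i 1) * fderiv ℝ f y (Pi.single j 1) *
        fderiv ℝ (fun w => fderiv ℝ f w (Pi.single i 1)) z (Pi.single j 1) ≤ 0)
    (T : (Fin n → ℝ) → ℝ)
    (hT : ∀ y, T y = ∫ t in Set.Ioo (0 : ℝ) 1, (1 / (2 * Real.sqrt t)) *
      ∫ y', ∑ i, fderiv ℝ f y (Pi.single i 1) *
        fderiv ℝ f (Real.sqrt t • y + Real.sqrt (1 - t) • y') (Pi.single i 1)
        ∂(stdGaussian n))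
    (Tbar : (Fin n → ℝ) → ℝ)
    (hTbar : ∀ y, Tbar y = ∫ s in Set.Ioo (0 : ℝ) 1, (1 / (2 * Real.sqrt s)) *
      ∫ y'', ∑ j, fderiv ℝ f y (Pi.single j 1) *
        fderiv ℝ T (Real.sqrt s • y + Real.sqrt (1 - s) • y'') (Pi.single j 1)
        ∂(stdGaussian n)) :
    ∀ y : Fin n → ℝ, Tbar y ≤ 0 := by
  intro y
  obtain ⟨C, c, hC, hc, hgB, hDB⟩ := constants (fun i => pd f i)
    (fun i j x => fderiv ℝ (pd f i) x (Pi.single j 1)) hfgrowth' hfgrowth''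
  have key := key_nonpos f hC hc hf hgB hDB hsign T hT
  rw [hTbar y]
  refine integral_nonpos fun s => ?_
  refine mul_nonpos_of_nonneg_of_nonpos (div_nonneg zero_le_one (by positivity)) ?_
  refine integral_nonpos fun y'' => ?_
  exact key y (Real.sqrt s • y + Real.sqrt (1 - s) • y'')
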